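/- arXiv:2001.02636 — 4 statements merged into one kernel-verified Lean document; each statement's English description precedes it below -/
import Mathlib

section
/- (Theorem 1) For every k ∈ ℕ, the polynomial Q_k(x) := ∑_{i=0}^{k+1} Δ^i 0^{k+1} · (x − 1)^{k+1−i} (equivalently, Q_k(x) = (x−1)^{k+1} ∑_{i=0}^{k+1} Δ^i 0^{k+1}/(x−1)^i) coincides with the Euler–Frobenius polynomial E_k: Q_k(x) = E_k(x) as polynomials. -/
open Finset Polynomial

noncomputable section

/-- Euler's formula for the coefficients of the Euler–Frobenius polynomial `E_k`. -/
def efCoeff (k s : ℕ) : ℤ :=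
  ∑ j ∈ Finset.range (s + 1),
    (-1) ^ j * ((k + 2).choose j : ℤ) * ((s + 1 - j : ℕ) : ℤ) ^ (k + 1)

/-- The Euler–Frobenius polynomial `E_k` as a real polynomial. -/
def efPoly (k : ℕ) : Polynomial ℝ :=
  ∑ s ∈ Finset.range (k + 1), Polynomial.C ((efCoeff k s : ℝ)) * Polynomial.X ^ s

/-- `Δ^i 0^j = ∑_{l=1}^{i} (−1)^{i−l} C(i, l) l^j`. -/
def d0 (i j : ℕ) : ℤ :=
  ∑ l ∈ Finset.Icc 1 i, (-1) ^ (i - l) * (i.choose l : ℤ) * (l : ℤ) ^ j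

/-- The polynomial `Q_k(x) = ∑_{i=0}^{k+1} Δ^i 0^{k+1} (x−1)^{k+1−i}`. -/
def qPoly (k : ℕ) : Polynomial ℝ :=
  ∑ i ∈ Finset.range (k + 2), Polynomial.C ((d0 i (k + 1) : ℝ)) * (Polynomial.X - 1) ^ (k + 1 - i)

/-! ### Auxiliary lemmas -/

lemma negpow_congr {a b : ℕ} (h : a % 2 = b % 2) : ((-1:ℤ))^a = (-1)^b := by
  rw [neg_one_pow_eq_pow_mod_two, h, ← neg_one_pow_eq_pow_mod_two]

/-- Upper Vandermonde / hockey-stick convolution identity. -/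
lemma upperVan (l : ℕ) : ∀ (n s : ℕ),
    ∑ i ∈ range (n+1), (i.choose l) * ((n-i).choose s) = (n+1).choose (l+s+1) := by
  intro n
  induction n with
  | zero =>
    intro s
    cases l <;> cases s <;> simp [Nat.choose, Nat.choose_eq_zero_of_lt]
  | succ n ih =>
    intro s
    rw [Finset.sum_range_succ]
    have hsub : ∀ i ∈ range (n+1), (n+1-i) = (n-i)+1 := by
      intro i hi; simp only [mem_range] at hi; omega
    cases s with
    | zero =>
      have : ∑ i ∈ range (n+1), (i.choose l) * ((n+1-i).choose 0)
          = ∑ i ∈ range (n+1), (i.choose l) * ((n-i).choose 0) := by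
        apply Finset.sum_congr rfl; intro i hi; simp
      rw [this, ih 0]
      simp only [Nat.choose_zero_right, Nat.mul_one]
      rw [Nat.add_comm ((n+1).choose (l+0+1)) _]
      exact (Nat.choose_succ_succ (n+1) l).symm
    | succ s =>
      have : ∑ i ∈ range (n+1), (i.choose l) * ((n+1-i).choose (s+1))
          = ∑ i ∈ range (n+1), ((i.choose l) * ((n-i).choose s)
            + (i.choose l) * ((n-i).choose (s+1))) := by
        apply Finset.sum_congr rfl; intro i hi
        rw [hsub i hi, Nat.choose_succ_succ, Nat.mul_add]
      rw [this, Finset.sum_add_distrib, ih s, ih (s+1)]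
      have h0 : Nat.choose 0 (s+1) = 0 := by simp
      rw [Nat.sub_self, h0, Nat.mul_zero, Nat.add_zero]
      exact (Nat.choose_succ_succ (n+1) (l+s+1)).symm

open scoped fwdDiff in
lemma fwd_pow_zero : ∀ m : ℕ, ∀ n : ℕ, m < n →
    (fwdDiff (1:ℤ))^[n] (fun x : ℤ => x ^ m) = 0 := by
  intro m
  induction m using Nat.strong_induction_on with
  | _ m IH =>
    intro n hmn
    obtain ⟨n', rfl⟩ : ∃ n', n = n' + 1 := ⟨n - 1, by omega⟩
    rw [Function.iterate_succ_apply]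
    have hstep : fwdDiff (1:ℤ) (fun x : ℤ => x ^ m)
        = ∑ t ∈ range m, ((m.choose t : ℤ)) • (fun x : ℤ => x ^ t) := by
      funext x
      simp only [fwdDiff, Finset.sum_apply, Pi.smul_apply, smul_eq_mul]
      have := add_pow x (1:ℤ) m
      simp only [one_pow, mul_one] at this
      rw [this, Finset.sum_range_succ]
      simp [mul_comm]
    rw [hstep, fwdDiff_iter_finset_sum]
    apply Finset.sum_eq_zero
    intro t ht
    simp only [mem_range] at ht
    rw [fwdDiff_iter_const_smul, IH t ht n' (by omega)]
    simp

/-- The `n`-th alternating binomial sum of a polynomial of degree `m < n` vanishes. -/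
lemma alt_sum_zero (n m : ℕ) (h : m < n) (c : ℤ) :
    ∑ j ∈ range (n+1), (-1:ℤ)^j * (n.choose j : ℤ) * (c - j)^m = 0 := by
  have hf : (fwdDiff (1:ℤ))^[n] (fun x : ℤ => (c - x) ^ m) = 0 := by
    have hexp : (fun x : ℤ => (c - x) ^ m)
        = ∑ t ∈ range (m+1), ((m.choose t : ℤ) * c ^ (m - t) * (-1)^t) • (fun x : ℤ => x ^ t) := by
      funext x
      simp only [Finset.sum_apply, Pi.smul_apply, smul_eq_mul]
      rw [sub_eq_add_neg, add_comm, add_pow]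
      apply Finset.sum_congr rfl
      intro t ht
      rw [neg_pow]
      ring
    rw [hexp, fwdDiff_iter_finset_sum]
    apply Finset.sum_eq_zero
    intro t ht
    simp only [mem_range] at ht
    rw [fwdDiff_iter_const_smul, fwd_pow_zero t n (by omega)]
    simp
  have h0 := fwdDiff_iter_eq_sum_shift (1:ℤ) (fun x : ℤ => (c - x) ^ m) n 0
  rw [hf] at h0
  simp only [Pi.zero_apply, smul_eq_mul, nsmul_eq_mul, mul_one, zero_add] at h0
  have h0' : ∑ k ∈ range (n+1), (-1:ℤ)^(n-k) * (n.choose k : ℤ) * (c - k)^m = 0 := by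
    rw [← h0]
  calc ∑ j ∈ range (n+1), (-1:ℤ)^j * (n.choose j : ℤ) * (c - j)^m
      = ∑ j ∈ range (n+1), (-1:ℤ)^n * ((-1:ℤ)^(n-j) * (n.choose j : ℤ) * (c - j)^m) := by
        apply Finset.sum_congr rfl
        intro j hj
        simp only [mem_range] at hj
        rw [← mul_assoc, ← mul_assoc, ← pow_add]
        congr 2
        exact negpow_congr (by omega)
    _ = 0 := by rw [← Finset.mul_sum, h0', mul_zero]

/-- Palindromic rewriting of the Euler--Frobenius coefficients. -/
lemma efCoeff_eq (k s : ℕ) (hs : s ≤ k) :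
    efCoeff k s = ∑ j ∈ range (k - s + 1),
      (-1:ℤ)^j * ((k+2).choose j : ℤ) * ((k + 1 - s - j : ℕ) : ℤ)^(k+1) := by
  have hF := alt_sum_zero (k+2) (k+1) (by omega) ((s:ℤ)+1)
  -- split the sum at s+2
  rw [range_eq_Ico, ← Finset.sum_Ico_consecutive _ (by omega : 0 ≤ s+2) (by omega : s+2 ≤ k+3)]
    at hF
  have hpart1 : ∑ j ∈ Finset.Ico 0 (s+2), (-1:ℤ)^j * ((k+2).choose j : ℤ) * (((s:ℤ)+1) - j)^(k+1)
      = efCoeff k s := by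
    rw [show Finset.Ico 0 (s+2) = range (s+2) by rw [range_eq_Ico]]
    rw [Finset.sum_range_succ]
    have hz : (((s:ℤ)+1) - (s+1:ℕ))^(k+1) = 0 := by
      push_cast; ring_nf
    rw [hz, mul_zero, add_zero, efCoeff]
    apply Finset.sum_congr rfl
    intro j hj
    simp only [mem_range] at hj
    congr 2
    omega
  have hpart2 : ∑ j ∈ Finset.Ico (s+2) (k+3), (-1:ℤ)^j * ((k+2).choose j : ℤ)
        * (((s:ℤ)+1) - j)^(k+1)
      = ∑ j ∈ range (k - s + 1),
        -((-1:ℤ)^j * ((k+2).choose j : ℤ) * ((k + 1 - s - j : ℕ) : ℤ)^(k+1)) := by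
    apply Finset.sum_nbij' (fun j => k + 2 - j) (fun j => k + 2 - j)
    · intro a ha; simp only [Finset.mem_Ico] at ha; simp only [mem_range]; omega
    · intro a ha; simp only [mem_range] at ha; simp only [Finset.mem_Ico]; omega
    · intro a ha; simp only [Finset.mem_Ico] at ha; omega
    · intro a ha; simp only [mem_range] at ha; omega
    · intro a ha
      simp only [Finset.mem_Ico] at ha
      have hc : ((k+2).choose (k+2-a)) = (k+2).choose a := Nat.choose_symm (by omega)
      have hn : k + 1 - s - (k + 2 - a) = a - s - 1 := by omega
      have h2 : (((s:ℤ)+1) - a) = -(((a - s - 1 : ℕ) : ℤ)) := by omega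
      rw [hc, hn, h2, neg_pow]
      have hsgn : -((-1:ℤ)^(k+2-a)) = (-1:ℤ)^a * (-1)^(k+1) := by
        have : -((-1:ℤ)^(k+2-a)) = (-1:ℤ)^(k+2-a+1) := by rw [pow_succ]; ring
        rw [this, ← pow_add]
        exact negpow_congr (by omega)
      rw [← neg_neg ((-1:ℤ)^(k+2-a)), hsgn]
      ring
  rw [hpart1, hpart2, Finset.sum_neg_distrib] at hF
  omega

/-- The key coefficient identity. -/
lemma main_coeff (k s : ℕ) :
    ∑ i ∈ range (k+2), d0 i (k+1) * ((-1:ℤ)^(k+1-i-s) * (((k+1-i).choose s : ℕ) : ℤ))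
      = if s < k+1 then efCoeff k s else 0 := by
  rcases Nat.lt_or_ge s (k+1) with hs | hs
  case inr =>
    rw [if_neg (by omega)]
    apply Finset.sum_eq_zero
    intro i hi
    rcases Nat.eq_zero_or_pos i with rfl | hi0
    · simp [d0]
    · have : (k+1-i).choose s = 0 := Nat.choose_eq_zero_of_lt (by omega)
      rw [this]; simp
  case inl =>
    have hsk : s ≤ k := by omega
    rw [if_pos hs]
    -- Step 1: expand d0 and extend/rewrite the inner sum
    have step1 : ∑ i ∈ range (k+2), d0 i (k+1) * ((-1:ℤ)^(k+1-i-s) * (((k+1-i).choose s : ℕ) : ℤ))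
        = ∑ i ∈ range (k+2), ∑ l ∈ Finset.Icc 1 (k+1),
            (-1:ℤ)^(k+1+s+l) * (l:ℤ)^(k+1) * ((i.choose l * ((k+1-i).choose s) : ℕ) : ℤ) := by
      apply Finset.sum_congr rfl
      intro i hi
      simp only [mem_range] at hi
      rw [d0, Finset.sum_mul]
      rw [Finset.sum_subset (Finset.Icc_subset_Icc_right (by omega : i ≤ k+1))]
      · apply Finset.sum_congr rfl
        intro l hl
        simp only [Finset.mem_Icc] at hl
        rcases Nat.lt_or_ge i l with hil | hil
        · have hz : i.choose l = 0 := Nat.choose_eq_zero_of_lt hil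
          rw [hz]; simp
        rcases Nat.lt_or_ge (k+1-i) s with hlt | hge
        · have hz : (k+1-i).choose s = 0 := Nat.choose_eq_zero_of_lt hlt
          rw [hz]; simp
        · have hsgn : (-1:ℤ)^(i-l) * (-1:ℤ)^(k+1-i-s) = (-1:ℤ)^(k+1+s+l) := by
            rw [← pow_add]
            exact negpow_congr (by omega)
          push_cast
          calc (-1:ℤ)^(i-l) * (i.choose l : ℤ) * (l:ℤ)^(k+1)
                * ((-1:ℤ)^(k+1-i-s) * (((k+1-i).choose s : ℕ):ℤ))
              = ((-1:ℤ)^(i-l) * (-1:ℤ)^(k+1-i-s)) * ((i.choose l : ℤ) * (l:ℤ)^(k+1)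
                * (((k+1-i).choose s : ℕ):ℤ)) := by ring
            _ = _ := by rw [hsgn]; ring
      · intro l hl hnl
        simp only [Finset.mem_Icc] at hl hnl
        have : i.choose l = 0 := Nat.choose_eq_zero_of_lt (by omega)
        rw [this]
        simp
    rw [step1, Finset.sum_comm]
    -- Step 2: inner sums via Vandermonde
    have step2 : ∀ l, ∑ i ∈ range (k+2),
          (-1:ℤ)^(k+1+s+l) * (l:ℤ)^(k+1) * ((i.choose l * ((k+1-i).choose s) : ℕ) : ℤ)
        = (-1:ℤ)^(k+1+s+l) * (l:ℤ)^(k+1) * (((k+2).choose (l+s+1) : ℕ) : ℤ) := by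
      intro l
      rw [← Finset.mul_sum, ← Nat.cast_sum, upperVan l (k+1) s]
    simp only [step2]
    -- Step 3: restrict and reindex
    rw [← Finset.sum_subset (Finset.Icc_subset_Icc_right (by omega : k+1-s ≤ k+1))]
    · rw [efCoeff_eq k s hsk]
      apply Finset.sum_nbij' (fun l => k+1-s-l) (fun j => k+1-s-j)
      · intro a ha; simp only [Finset.mem_Icc] at ha; simp only [mem_range]; omega
      · intro a ha; simp only [mem_range] at ha; simp only [Finset.mem_Icc]; omega
      · intro a ha; simp only [Finset.mem_Icc] at ha; omega
      · intro a ha; simp only [mem_range] at ha; omega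
      · intro a ha
        simp only [Finset.mem_Icc] at ha
        have h1 : k+1-s-(k+1-s-a) = a := by omega
        have h2 : (k+2).choose (a+s+1) = (k+2).choose (k+1-s-a) := by
          rw [← Nat.choose_symm (by omega : k+1-s-a ≤ k+2)]
          congr 1
          omega
        rw [h1, h2]
        have hsgn : (-1:ℤ)^(k+1+s+a) = (-1:ℤ)^(k+1-s-a) := negpow_congr (by omega)
        rw [hsgn]
        ring
    · intro l hl hnl
      simp only [Finset.mem_Icc] at hl hnl
      have : (k+2).choose (l+s+1) = 0 := Nat.choose_eq_zero_of_lt (by omega)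
      rw [this]
      simp

/-- **Theorem 1** (Lemma 3 of Shadimetov): `Q_k = E_k` as polynomials. -/
theorem qPoly_eq_efPoly : ∀ k : ℕ, qPoly k = efPoly k := by
  intro k
  ext n
  rw [qPoly, efPoly, finset_sum_coeff, finset_sum_coeff]
  have hX : (X - 1 : ℝ[X]) = X + C (-1) := by
    rw [map_neg, map_one]; ring
  have hL : ∀ i ∈ range (k+2),
      (C ((d0 i (k + 1) : ℝ)) * (X - 1) ^ (k + 1 - i)).coeff n
        = (d0 i (k+1) : ℝ) * ((-1:ℝ)^(k+1-i-n) * (((k+1-i).choose n : ℕ) : ℝ)) := by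
    intro i _
    rw [coeff_C_mul, hX, coeff_X_add_C_pow]
  rw [Finset.sum_congr rfl hL]
  have hR : ∑ s ∈ range (k+1), (C ((efCoeff k s : ℝ)) * X ^ s).coeff n
      = if n < k+1 then (efCoeff k n : ℝ) else 0 := by
    simp only [coeff_C_mul, coeff_X_pow, mul_ite, mul_one, mul_zero]
    rw [Finset.sum_ite_eq]
    simp [Finset.mem_range]
  rw [hR]
  have := congrArg (fun z : ℤ => (z : ℝ)) (main_coeff k n)
  push_cast at this
  rw [this]
end
end

section
/- (Definition (2.5) agrees with Euler's coefficient formula) For every k ∈ ℕ and every complex x with 0 < |x| < 1, the series ∑_{γ=1}^{∞} γ^{k+1} x^γ converges absolutely and ((1 − x)^{k+2}/x) · ∑_{γ=1}^{∞} γ^{k+1} x^γ = E_k(x); that is, the function E_k(x) = ((1−x)^{k+2}/x) (x d/dx)^k (x/(1−x)²) is the polynomial whose coefficients are given by Euler's formula a_s = ∑_{j=0}^{s} (−1)^j C(k+2, j) (s+1−j)^{k+1}. -/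
/-!
Multiplying the power series `∑ γ ^ (k + 1) x ^ γ` by the polynomial `(1 - x) ^ (k + 2)` gives,
by the Cauchy product, the coefficients `∑ⱼ (-1) ^ j C(k+2, j) (n - j) ^ (k + 1)`. For `n ≥ k + 2`
this is a `(k + 2)`-nd finite difference of a polynomial of degree `k + 1`, hence zero, and for
`n = s + 1 ≤ k + 1` it is Euler's `a_s`.
-/

open Finset

noncomputable section

/-- Evaluation of the Euler–Frobenius polynomial `E_k` at a complex point. -/
def efEvalC (k : ℕ) (x : ℂ) : ℂ :=
  ∑ s ∈ Finset.range (k + 1), (efCoeff k s : ℂ) * x ^ s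

theorem sum_range_alternating_choose_mul_pow_eq_zero {R : Type*} [CommRing R] {d n : ℕ}
    (h : d < n) (y : R) :
    ∑ i ∈ range (n + 1), (-1) ^ (n - i) * (n.choose i : R) * (y + i) ^ d = 0 := by
  have := congr_fun (fwdDiff_iter_pow_eq_zero_of_lt (R := R) h) y
  rw [fwdDiff_iter_eq_sum_shift] at this
  simpa [zsmul_eq_mul] using this

theorem efCoeff_eq_sum_range_succ (k s : ℕ) :
    efCoeff k s = ∑ j ∈ range (s + 2),
      (-1) ^ j * ((k + 2).choose j : ℤ) * ((s + 1 - j : ℕ) : ℤ) ^ (k + 1) := by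
  rw [sum_range_succ _ (s + 1), efCoeff]
  simp

theorem efCoeff_eq_zero_of_lt {k s : ℕ} (h : k < s) : efCoeff k s = 0 := by
  have hvanish := sum_range_alternating_choose_mul_pow_eq_zero (by omega : k + 1 < k + 2)
    ((s - (k + 1) : ℕ) : ℤ)
  rw [← sum_range_reflect] at hvanish
  rw [efCoeff_eq_sum_range_succ, ← sum_subset (range_subset_range.mpr (by omega : k + 3 ≤ s + 2))
    fun j _ hj => by simp [Nat.choose_eq_zero_of_lt (by simp at hj; omega : k + 2 < j)]]
  rw [← hvanish]
  refine sum_congr rfl fun j hj => ?_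
  have hj : j ≤ k + 2 := by simp at hj; omega
  rw [show k + 2 + 1 - 1 - j = k + 2 - j by omega, show k + 2 - (k + 2 - j) = j by omega,
    Nat.choose_symm hj, ← Nat.cast_add, show s - (k + 1) + (k + 2 - j) = s + 1 - j by omega]

theorem one_sub_pow_eq_tsum {R : Type*} [CommRing R] [TopologicalSpace R] (m : ℕ) (x : R) :
    (1 - x) ^ m = ∑' j : ℕ, (-1) ^ j * (m.choose j : R) * x ^ j := by
  rw [tsum_eq_sum (s := range (m + 1))
    fun j hj => by simp [Nat.choose_eq_zero_of_lt (by simpa using hj : m < j)]]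
  rw [sub_eq_neg_add, add_pow]
  refine sum_congr rfl fun j _ => ?_
  rw [neg_pow, one_pow]
  ring

theorem summable_norm_one_sub_pow_coeff {R : Type*} [NormedCommRing R] (m : ℕ) (x : R) :
    Summable fun j : ℕ => ‖(-1) ^ j * (m.choose j : R) * x ^ j‖ :=
  summable_of_ne_finset_zero (s := range (m + 1))
    fun j hj => by simp [Nat.choose_eq_zero_of_lt (by simpa using hj : m < j)]

theorem tsum_mul_tsum_pow_eq_tsum_sum_range {R : Type*} [NormedCommRing R] [CompleteSpace R]
    {a b : ℕ → R} {x : R} (ha : Summable fun n => ‖a n * x ^ n‖)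
    (hb : Summable fun n => ‖b n * x ^ n‖) :
    (∑' n, a n * x ^ n) * (∑' n, b n * x ^ n) =
      ∑' n, (∑ j ∈ range (n + 1), a j * b (n - j)) * x ^ n := by
  rw [tsum_mul_tsum_eq_tsum_sum_range_of_summable_norm ha hb]
  refine tsum_congr fun n => ?_
  rw [sum_mul]
  refine sum_congr rfl fun j hj => ?_
  rw [← Nat.add_sub_of_le (by simpa [Nat.lt_succ_iff] using hj : j ≤ n), Nat.add_sub_cancel_left,
    pow_add]
  ring

theorem one_sub_pow_mul_tsum_eq_efEvalC_mul (k : ℕ) {x : ℂ} (hx : ‖x‖ < 1) :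
    (1 - x) ^ (k + 2) * ∑' γ : ℕ, (γ : ℂ) ^ (k + 1) * x ^ γ = efEvalC k x * x := by
  rw [one_sub_pow_eq_tsum, tsum_mul_tsum_pow_eq_tsum_sum_range
    (summable_norm_one_sub_pow_coeff _ x) (summable_norm_pow_mul_geometric_of_norm_lt_one _ hx)]
  have hcoeff : ∀ s : ℕ, ∑ j ∈ range (s + 1 + 1),
      (-1) ^ j * ((k + 2).choose j : ℂ) * ((s + 1 - j : ℕ) : ℂ) ^ (k + 1) = efCoeff k s := by
    intro s
    rw [efCoeff_eq_sum_range_succ]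
    push_cast
    rfl
  rw [tsum_eq_sum (s := range (k + 2)) fun n hn => ?vanish, sum_range_succ', efEvalC]
  case vanish =>
    obtain ⟨s, rfl⟩ : ∃ s, n = s + 1 := Nat.exists_eq_succ_of_ne_zero (by simp at hn; omega)
    rw [hcoeff, efCoeff_eq_zero_of_lt (by simp at hn; omega)]
    simp
  simp only [hcoeff]
  simp [pow_succ, sum_mul, mul_assoc]

/-- **Definition (2.5) agrees with Euler's coefficient formula**: for `0 < |x| < 1`, the series
`∑_{γ≥1} γ^{k+1} x^γ` converges absolutely (here summed over all of `ℕ`, the term at `γ = 0`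
vanishing), and `((1−x)^{k+2}/x) ∑_{γ≥1} γ^{k+1} x^γ = E_k(x)`. -/
theorem efEval_eq_generating_function (k : ℕ) (x : ℂ)
    (hx0 : 0 < ‖x‖) (hx1 : ‖x‖ < 1) :
    Summable (fun γ : ℕ => ‖(γ : ℂ) ^ (k + 1) * x ^ γ‖) ∧
    (1 - x) ^ (k + 2) / x * ∑' γ : ℕ, (γ : ℂ) ^ (k + 1) * x ^ γ = efEvalC k x := by
  refine ⟨summable_norm_pow_mul_geometric_of_norm_lt_one _ hx1, ?_⟩
  rw [div_mul_eq_mul_div, one_sub_pow_mul_tsum_eq_efEvalC_mul k hx1,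
    mul_div_cancel_right₀ _ (norm_pos_iff.mp hx0)]
end
end

section
/- (Root pairing) For every integer k ≥ 1, if q_1 < q_2 < ⋯ < q_k < 0 denote the (real, negative, distinct) roots of the Euler–Frobenius polynomial E_k, then q_j · q_{k+1−j} = 1 for every j = 1, …, k. -/
open Finset Polynomial

noncomputable section

/-! The coefficients of `E_k` are palindromic, `a_{k-s} = a_s`. Writing `x₊ = max x 0`, one has
`a_s = ∑_j (-1)^j C(k+2, j) (s+1-j)₊^(k+1)`, and `x₊^m + (-1)^m (-x)₊^m = x^m`; since the
`(k+2)`-th finite difference of `x ↦ x^(k+1)` vanishes, reflecting `j ↦ k+2-j` turns `a_{k-s}`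
into `a_s`. Hence `E_k(x) = x^k E_k(1/x)`, so the roots are closed under `x ↦ 1/x`. This map
reverses the order of the negative reals, so it maps the increasing list of roots to itself
read backwards: `1/q_{k+1-j} = q_j`. -/

theorem sum_range_neg_one_pow_mul_choose_mul_sub_pow_eq_zero {R : Type*} [CommRing R] {m n : ℕ}
    (hmn : m < n) (x : R) :
    ∑ j ∈ range (n + 1), (-1) ^ j * (n.choose j : R) * (x - j) ^ m = 0 := by
  have h := fwdDiff_iter_eq_sum_shift (1 : R) (fun r : R ↦ r ^ m) n (x - n)
  rw [fwdDiff_iter_pow_eq_zero_of_lt hmn, Pi.zero_apply, ← sum_range_reflect] at h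
  rw [h]
  refine sum_congr rfl fun j hj ↦ ?_
  have hj : j ≤ n := by rw [mem_range] at hj; omega
  rw [Nat.add_sub_cancel, Nat.sub_sub_self hj, Nat.choose_symm hj, nsmul_one, Nat.cast_sub hj,
    zsmul_eq_mul]
  push_cast
  ring

theorem natCast_tsub_pow_add_neg_one_pow_mul_natCast_tsub_pow {m : ℕ} (hm : m ≠ 0) (a b : ℕ) :
    ((a - b : ℕ) : ℤ) ^ m + (-1) ^ m * ((b - a : ℕ) : ℤ) ^ m = ((a : ℤ) - b) ^ m := by
  rcases le_total a b with h | h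
  · rw [Nat.sub_eq_zero_of_le h, Nat.cast_sub h, ← neg_one_mul, ← mul_pow]
    simp [zero_pow hm]
  · rw [Nat.sub_eq_zero_of_le h, Nat.cast_sub h]
    simp [zero_pow hm]

theorem efCoeff_eq_sum_range {k s : ℕ} (hs : s ≤ k + 2) :
    efCoeff k s = ∑ j ∈ range (k + 3),
      (-1) ^ j * ((k + 2).choose j : ℤ) * ((s + 1 - j : ℕ) : ℤ) ^ (k + 1) := by
  -- the added terms vanish because the truncated subtraction `s + 1 - j` is `0` for `j > s`
  refine sum_subset (range_subset_range.2 (by omega)) fun j _ hj ↦ ?_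
  rw [mem_range, not_lt] at hj
  simp [Nat.sub_eq_zero_of_le hj]

theorem efCoeff_symm {k s : ℕ} (hs : s ≤ k) : efCoeff k (k - s) = efCoeff k s := by
  set D := ∑ j ∈ range (k + 3),
    (-1) ^ j * ((k + 2).choose j : ℤ) * ((j - (s + 1) : ℕ) : ℤ) ^ (k + 1)
  have hleft : efCoeff k (k - s) = (-1) ^ (k + 2) * D := by
    rw [efCoeff_eq_sum_range (by omega), ← sum_range_reflect, mul_sum]
    refine sum_congr rfl fun j hj ↦ ?_
    have hj : j ≤ k + 2 := by rw [mem_range] at hj; omega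
    rw [show k + 3 - 1 - j = k + 2 - j by omega, Nat.choose_symm hj,
      show k - s + 1 - (k + 2 - j) = j - (s + 1) by omega]
    have hsign := pow_sub_mul_pow (-1 : ℤ) hj
    have hsq : ((-1 : ℤ) ^ j) ^ 2 = 1 := by rw [← pow_mul, mul_comm, pow_mul, neg_one_sq, one_pow]
    set c : ℤ := ((k + 2).choose j : ℤ) * ((j - (s + 1) : ℕ) : ℤ) ^ (k + 1)
    linear_combination ((-1) ^ j * c) * hsign - ((-1) ^ (k + 2 - j) * c) * hsq
  have hright : efCoeff k s + (-1) ^ (k + 1) * D = 0 := by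
    rw [efCoeff_eq_sum_range (by omega), mul_sum, ← sum_add_distrib,
      ← sum_range_neg_one_pow_mul_choose_mul_sub_pow_eq_zero (by omega : k + 1 < k + 2)
        ((s : ℤ) + 1)]
    refine sum_congr rfl fun j _ ↦ ?_
    have h := natCast_tsub_pow_add_neg_one_pow_mul_natCast_tsub_pow (m := k + 1) (by omega)
      (s + 1) j
    push_cast at h
    rw [← h]
    ring
  rw [hleft]
  linear_combination -hright

theorem efPoly_eval_inv (k : ℕ) {x : ℝ} (hx : x ≠ 0) :
    (efPoly k).eval x⁻¹ = x⁻¹ ^ k * (efPoly k).eval x := by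
  simp only [efPoly, eval_finsetSum, eval_mul, eval_C, eval_pow, eval_X]
  rw [mul_sum, ← sum_range_reflect]
  refine sum_congr rfl fun s hs ↦ ?_
  have hs : s ≤ k := by rw [mem_range] at hs; omega
  rw [Nat.add_sub_cancel, efCoeff_symm hs, pow_sub₀ _ (inv_ne_zero hx) hs, ← inv_pow, inv_inv]
  ring

theorem efPoly_isRoot_inv {k : ℕ} {x : ℝ} (h : (efPoly k).IsRoot x) : (efPoly k).IsRoot x⁻¹ := by
  rcases eq_or_ne x 0 with rfl | hx
  · rwa [inv_zero]
  · rw [IsRoot.def, efPoly_eval_inv k hx, h.eq_zero, mul_zero]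

theorem StrictMono.comp_comp_rev_eq {α : Type*} [LinearOrder α] {k : ℕ} {q : Fin k → α}
    {g : α → α} (hq : StrictMono q) (hg : StrictAntiOn g (Set.range q))
    (hg_inv : Function.Involutive g) (hmaps : ∀ j, g (q j) ∈ Set.range q) :
    g ∘ q ∘ Fin.rev = q := by
  have hmono : StrictMono (g ∘ q ∘ Fin.rev) := fun a b hab ↦
    hg (Set.mem_range_self _) (Set.mem_range_self _) (hq (Fin.rev_lt_rev.2 hab))
  refine (hmono.range_inj hq).1 (Set.Subset.antisymm ?_ ?_)
  · rintro _ ⟨j, rfl⟩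
    exact hmaps _
  · rintro _ ⟨j, rfl⟩
    obtain ⟨i, hi⟩ := hmaps j
    exact ⟨i.rev, by simp [hi, hg_inv (q j)]⟩

theorem efPoly_roots_pairing_general (k : ℕ) (q : Fin k → ℝ)
    (hmono : StrictMono q) (hneg : ∀ j, q j < 0)
    (hfact : efPoly k = ∏ j : Fin k, (Polynomial.X - Polynomial.C (q j))) :
    ∀ j : Fin k, q j * q j.rev = 1 := by
  have hroots (x : ℝ) : (efPoly k).IsRoot x ↔ x ∈ Set.range q := by
    rw [hfact, isRoot_prod]
    simp only [mem_univ, true_and, root_X_sub_C, Set.mem_range]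
  have hinv_anti : StrictAntiOn (·⁻¹) (Set.range q) := by
    rintro _ ⟨a, rfl⟩ _ ⟨b, rfl⟩ hab
    exact (inv_lt_inv_of_neg (hneg b) (hneg a)).2 hab
  have hpair := hmono.comp_comp_rev_eq hinv_anti inv_involutive
    fun j ↦ (hroots _).1 (efPoly_isRoot_inv ((hroots _).2 ⟨j, rfl⟩))
  intro j
  rw [← congrFun hpair j]
  exact inv_mul_cancel₀ (hneg j.rev).ne

/-- **Root pairing**: if `q_1 < ⋯ < q_k < 0` are the roots of `E_k`, then
`q_j · q_{k+1−j} = 1` for every `j` (in `Fin k` indexing, `q j * q j.rev = 1`). -/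
theorem efPoly_roots_pairing (k : ℕ) (hk : 1 ≤ k) (q : Fin k → ℝ)
    (hmono : StrictMono q) (hneg : ∀ j, q j < 0)
    (hfact : efPoly k = ∏ j : Fin k, (Polynomial.X - Polynomial.C (q j))) :
    ∀ j : Fin k, q j * q j.rev = 1 :=
  efPoly_roots_pairing_general k q hmono hneg hfact
end
end

section
/- (Formula (2.20)) Let m ≥ 1 be an integer, ω ∈ ℝ with ω ≠ 0, and t ∈ [0,1]. Set G_m(x) := |x|^{2m−1}/(2(2m−1)!) and g_α := ∫_0^1 e^{2πiωx} x^α dx. Then ∫_0^1 e^{2πiωx} G_m(x − t) dx = −∑_{α=0}^{2m−1} t^{2m−1−α} (−1)^α g_α / (2 · α! · (2m−1−α)!) + e^{2πiωt}/(2πiω)^{2m} − ∑_{k=0}^{2m−1} t^{2m−1−k} / ((2m−1−k)! (2πiω)^{k+1}). -/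
open Finset

noncomputable section

/-- `2πi·x` as a complex number. -/
def twoPiI (x : ℝ) : ℂ := 2 * Real.pi * Complex.I * x

/-- `e^{2πi x}`. -/
def cexp2 (x : ℝ) : ℂ := Complex.exp (twoPiI x)

/-!
With `n = 2m - 1` odd and `c = 2πiω`, `|x - t|ⁿ` equals `(x - t)ⁿ` on `[t, 1]` and `-(x - t)ⁿ`
on `[0, t]`, so the integral is `∫₀¹ e^{cx} (x - t)ⁿ + 2 ∫₀ᵗ e^{cx} (t - x)ⁿ`. The first term
expands binomially into the moments `g_α`; the second is evaluated by integrating by parts `n`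
times, each step lowering the power of `t - x` by one.
-/

open MeasureTheory (volume)
open intervalIntegral

theorem integral_mul_abs_sub_pow_of_odd {f : ℝ → ℂ} {a b t : ℝ} {n : ℕ} (hn : Odd n)
    (hf : IntervalIntegrable f volume a b) (ht : t ∈ Set.Icc a b) :
    ∫ x in a..b, f x * ((|x - t| ^ n : ℝ) : ℂ)
      = (∫ x in a..b, f x * ((x : ℂ) - t) ^ n) + 2 * ∫ x in a..t, f x * ((t : ℂ) - x) ^ n := by
  have hsub {u v : ℝ} (h : Set.uIcc u v ⊆ Set.uIcc a b) {g : ℝ → ℂ} (hg : Continuous g) :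
      IntervalIntegrable (fun x => f x * g x) volume u v :=
    (hf.mono_set h).mul_continuousOn hg.continuousOn
  have hat : Set.uIcc a t ⊆ Set.uIcc a b :=
    Set.uIcc_subset_uIcc_left (Set.mem_uIcc_of_le ht.1 ht.2)
  have htb : Set.uIcc t b ⊆ Set.uIcc a b :=
    Set.uIcc_subset_uIcc_right (Set.mem_uIcc_of_le ht.1 ht.2)
  rw [← integral_add_adjacent_intervals (hsub hat (by fun_prop)) (hsub htb (by fun_prop)),
    ← integral_add_adjacent_intervals (hsub hat (by fun_prop)) (hsub htb (by fun_prop))]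
  have left :
      ∫ x in a..t, f x * ((|x - t| ^ n : ℝ) : ℂ) = ∫ x in a..t, f x * ((t : ℂ) - x) ^ n := by
    refine integral_congr fun x hx => ?_
    rw [Set.uIcc_of_le ht.1] at hx
    rw [abs_of_nonpos (by linarith [hx.2]), neg_sub]
    push_cast; rfl
  have right :
      ∫ x in t..b, f x * ((|x - t| ^ n : ℝ) : ℂ) = ∫ x in t..b, f x * ((x : ℂ) - t) ^ n := by
    refine integral_congr fun x hx => ?_
    rw [Set.uIcc_of_le ht.2] at hx
    rw [abs_of_nonneg (by linarith [hx.1])]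
    push_cast; rfl
  have flip : ∫ x in a..t, f x * ((x : ℂ) - t) ^ n = -∫ x in a..t, f x * ((t : ℂ) - x) ^ n := by
    rw [← integral_neg]
    refine integral_congr fun x _ => ?_
    rw [← neg_sub, hn.neg_pow, mul_neg]
  rw [left, right, flip]
  ring

theorem integral_mul_sub_pow {f : ℝ → ℂ} {a b : ℝ} (hf : IntervalIntegrable f volume a b)
    (t : ℂ) (n : ℕ) :
    ∫ x in a..b, f x * ((x : ℂ) - t) ^ n
      = ∑ α ∈ range (n + 1),
          (n.choose α : ℂ) * (-t) ^ (n - α) * ∫ x in a..b, f x * (x : ℂ) ^ α := by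
  have expand : ∀ x : ℝ, f x * ((x : ℂ) - t) ^ n
      = ∑ α ∈ range (n + 1), (n.choose α : ℂ) * (-t) ^ (n - α) * (f x * (x : ℂ) ^ α) := fun x => by
    rw [sub_eq_add_neg, add_pow, mul_sum]
    exact sum_congr rfl fun α _ => by ring
  simp_rw [expand]
  rw [integral_finsetSum fun α _ => (hf.mul_continuousOn (by fun_prop)).const_mul _]
  simp_rw [integral_const_mul]

theorem integral_cexp_mul_mul_sub_pow_succ {c : ℂ} (hc : c ≠ 0) (t : ℝ) (n : ℕ) :
    ∫ x in (0 : ℝ)..t, Complex.exp (c * x) * ((t : ℂ) - x) ^ (n + 1)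
      = ((n + 1) * (∫ x in (0 : ℝ)..t, Complex.exp (c * x) * ((t : ℂ) - x) ^ n) - (t : ℂ) ^ (n + 1))
          / c := by
  have hu : ∀ x ∈ Set.uIcc 0 t, HasDerivAt (fun x : ℝ => ((t : ℂ) - x) ^ (n + 1))
      (-((n + 1) * ((t : ℂ) - x) ^ n)) x := fun x _ => by
    simpa using (((hasDerivAt_id x).ofReal_comp.const_sub (t : ℂ)).fun_pow (n + 1))
  have hv : ∀ x ∈ Set.uIcc 0 t, HasDerivAt (fun x : ℝ => Complex.exp (c * x) / c)
      (Complex.exp (c * x)) x := fun x _ => by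
    simpa [hc] using (((hasDerivAt_id x).ofReal_comp.const_mul c).cexp.div_const c)
  have parts := integral_mul_deriv_eq_deriv_mul hu hv
    (Continuous.intervalIntegrable (by fun_prop) _ _)
    (Continuous.intervalIntegrable (by fun_prop) _ _)
  have integrand : ∀ x : ℝ, -((n + 1) * ((t : ℂ) - x) ^ n) * (Complex.exp (c * x) / c)
      = -((n + 1) / c) * (Complex.exp (c * x) * ((t : ℂ) - x) ^ n) := fun x => by ring
  simp_rw [integrand, integral_const_mul, sub_self, Complex.ofReal_zero, sub_zero, mul_zero,
    Complex.exp_zero, zero_pow n.succ_ne_zero, zero_mul] at parts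
  rw [integral_congr fun x _ => mul_comm _ _, parts]
  ring

theorem integral_cexp_mul_mul_sub_pow {c : ℂ} (hc : c ≠ 0) (t : ℝ) (n : ℕ) :
    ∫ x in (0 : ℝ)..t, Complex.exp (c * x) * ((t : ℂ) - x) ^ n
      = n.factorial * (Complex.exp (c * t) / c ^ (n + 1)
          - ∑ k ∈ range (n + 1), (t : ℂ) ^ (n - k) / ((n - k).factorial * c ^ (k + 1))) := by
  induction n with
  | zero => simp [integral_exp_mul_complex hc, sub_div]
  | succ n ih =>
    have shift : ∑ k ∈ range (n + 1), (t : ℂ) ^ (n + 1 - (k + 1))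
          / ((n + 1 - (k + 1)).factorial * c ^ (k + 1 + 1))
        = (∑ k ∈ range (n + 1), (t : ℂ) ^ (n - k) / ((n - k).factorial * c ^ (k + 1))) / c := by
      rw [sum_div]
      refine sum_congr rfl fun k _ => ?_
      rw [Nat.add_sub_add_right, pow_succ, div_div, mul_assoc]
    rw [integral_cexp_mul_mul_sub_pow_succ hc, ih, sum_range_succ' _ (n + 1), shift]
    have hfac : (n.factorial : ℂ) ≠ 0 := Nat.cast_ne_zero.mpr n.factorial_ne_zero
    push_cast [Nat.factorial_succ]
    field_simp
    ring

theorem choose_mul_neg_pow_mul_div_factorial_of_odd {n α : ℕ} (hn : Odd n) (hα : α ≤ n)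
    (t g : ℂ) :
    (n.choose α : ℂ) * (-t) ^ (n - α) * g / (2 * n.factorial)
      = -(t ^ (n - α) * (-1) ^ α * g / (2 * α.factorial * (n - α).factorial)) := by
  have hsign : (-1 : ℂ) ^ (n - α) = -(-1) ^ α := by
    have hodd : (-1 : ℂ) ^ α * (-1) ^ (n - α) = -1 := by
      rw [← pow_add, Nat.add_sub_cancel' hα, hn.neg_one_pow]
    have heven : (-1 : ℂ) ^ α * (-1) ^ α = 1 := by
      rw [← pow_add, ← two_mul, (even_two_mul α).neg_one_pow]
    linear_combination (-1) ^ α * hodd - (-1) ^ (n - α) * heven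
  have hfac : (n.factorial : ℂ) ≠ 0 := Nat.cast_ne_zero.mpr n.factorial_ne_zero
  rw [Nat.cast_choose ℂ hα, neg_pow, hsign]
  field_simp

/-- **Formula (2.20)**: for `m ≥ 1`, real `ω ≠ 0` and `t ∈ [0,1]`, with
`G_m(x) = |x|^{2m−1}/(2(2m−1)!)` and `g_α = ∫₀¹ e^{2πiωx} x^α dx`,
`∫₀¹ e^{2πiωx} G_m(x−t) dx = −∑_{α=0}^{2m−1} t^{2m−1−α}(−1)^α g_α/(2·α!(2m−1−α)!)
  + e^{2πiωt}/(2πiω)^{2m} − ∑_{k=0}^{2m−1} t^{2m−1−k}/((2m−1−k)!(2πiω)^{k+1})`. -/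
theorem fourier_Gm_integral (m : ℕ) (hm : 1 ≤ m) (ω : ℝ) (hω : ω ≠ 0)
    (t : ℝ) (ht : t ∈ Set.Icc (0 : ℝ) 1) :
    ∫ x in (0 : ℝ)..1,
        cexp2 (ω * x) * ((|x - t| ^ (2 * m - 1) / (2 * (2 * m - 1).factorial) : ℝ) : ℂ)
      = -(∑ α ∈ Finset.range (2 * m),
            (t : ℂ) ^ (2 * m - 1 - α) * (-1 : ℂ) ^ α *
              (∫ x in (0 : ℝ)..1, cexp2 (ω * x) * (x : ℂ) ^ α)
              / (2 * (α.factorial : ℂ) * ((2 * m - 1 - α).factorial : ℂ)))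
        + cexp2 (ω * t) / (twoPiI ω) ^ (2 * m)
        - ∑ k ∈ Finset.range (2 * m),
            (t : ℂ) ^ (2 * m - 1 - k)
              / (((2 * m - 1 - k).factorial : ℂ) * (twoPiI ω) ^ (k + 1)) := by
  set c := twoPiI ω
  have hc : c ≠ 0 := by simp [c, twoPiI, Real.pi_ne_zero, hω]
  have hexp (x : ℝ) : cexp2 (ω * x) = Complex.exp (c * x) := by
    simp only [cexp2, twoPiI, c]
    push_cast
    ring_nf
  set n := 2 * m - 1
  have h2m : 2 * m = n + 1 := by omega
  have hn : Odd n := ⟨m - 1, by omega⟩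
  have hint : IntervalIntegrable (fun x : ℝ => Complex.exp (c * x)) volume 0 1 :=
    Continuous.intervalIntegrable (by fun_prop) _ _
  have lhs : ∫ x in (0 : ℝ)..1, Complex.exp (c * x) * ((|x - t| ^ n / (2 * n.factorial) : ℝ) : ℂ)
      = (∫ x in (0 : ℝ)..1, Complex.exp (c * x) * ((|x - t| ^ n : ℝ) : ℂ)) / (2 * n.factorial) := by
    rw [← integral_div]
    refine integral_congr fun x _ => ?_
    push_cast
    ring
  simp_rw [hexp, h2m]
  rw [lhs, integral_mul_abs_sub_pow_of_odd hn hint ht, integral_mul_sub_pow hint,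
    integral_cexp_mul_mul_sub_pow hc, add_div, sum_div]
  have hfac : (n.factorial : ℂ) ≠ 0 := Nat.cast_ne_zero.mpr n.factorial_ne_zero
  rw [sum_congr rfl fun α hα => choose_mul_neg_pow_mul_div_factorial_of_odd hn
    (Nat.lt_succ_iff.mp (mem_range.mp hα)) _ _, sum_neg_distrib, mul_div_mul_left _ _ two_ne_zero,
    mul_div_cancel_left₀ _ hfac, add_sub_assoc]
end
end
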